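/- Suppose ∑_{λ∈Λ} |f(λ)|² ≤ C|Ω|·‖f‖² for all f ∈ PW_Ω, where C > 0, Ω ⊂ ℝ has finite positive measure, and Λ ⊂ ℝ. Then there exists η > 0, depending only on Ω, such that #(Λ ∩ I) ≤ 9C for every interval I ⊂ ℝ of length η. -/

import Mathlib

open MeasureTheory ENNReal Filter

/-- The (inverse) Fourier transform with the paper's normalization:
`f(x) = (2π)^{-1/2} ∫ e^{-itx} F(t) dt`. -/
noncomputable def FT (F : ℝ → ℂ) (x : ℝ) : ℂ :=
  (Real.sqrt (2 * Real.pi) : ℂ)⁻¹ * ∫ t : ℝ, Complex.exp (-(Complex.I * t * x)) * F t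

/-- `f` belongs to the Paley–Wiener space `PW_Ω`: it is the Fourier transform of an
`L²` function `F` vanishing outside `Ω` (such `F` is automatically integrable when
`Ω` has finite measure, so `f` is continuous and pointwise evaluation makes sense). -/
def IsPW (Ω : Set ℝ) (f : ℝ → ℂ) : Prop :=
  ∃ F : ℝ → ℂ, MemLp F 2 volume ∧ (∀ t ∉ Ω, F t = 0) ∧ Integrable F volume ∧
    ∀ x, f x = FT F x

/-- `Λ ⊆ ℝ` has separation constant at least `δ`. -/
def Separated (δ : ℝ) (Λ : Set ℝ) : Prop :=
  ∀ x ∈ Λ, ∀ y ∈ Λ, x ≠ y → δ ≤ |x - y|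

/-!
Test the sampling inequality with the modulated indicator `F t = e^{ita} 1_Ω(t)`, whose transform
is the translate `h (x - a)` of `h = FT 1_Ω`. By Plancherel `‖FT F‖₂² ≤ ‖F‖₂² = |Ω|`, while
`|h 0| = |Ω| / √(2π) > |Ω| / 3`, so by continuity `|h| > |Ω| / 3` on an interval around `0` that
depends only on `Ω`. Each point of `Λ` in `[a, a + η]` then contributes at least `|Ω|² / 9` to a
sum that is at most `C |Ω|²`.

The Plancherel inequality for integrable `F` comes from Gaussian regularization: by Fubini and the
Fourier transform of `e^{-bx²}`, `∫ e^{-bx²} |FT F x|² dx` is a double integral of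
`F t · conj (F s)` against a kernel in `s - t` of mass `2π`, which the Schur test bounds by
`∫ |F|²`; Fatou's lemma lets `b → 0`.
-/

open Complex Real ComplexConjugate

lemma Complex.enorm_ofReal_of_nonneg {r : ℝ} (hr : 0 ≤ r) : ‖(r : ℂ)‖ₑ = ENNReal.ofReal r := by
  rw [← ofReal_norm, Complex.norm_real, Real.norm_of_nonneg hr]

lemma norm_cexp_I_mul_mul (t x : ℝ) : ‖cexp (I * t * x)‖ = 1 := by
  simp [Complex.norm_exp]

lemma norm_cexp_neg_I_mul_mul (t x : ℝ) : ‖cexp (-(I * t * x))‖ = 1 := by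
  simp [Complex.norm_exp]

lemma ENNReal.two_mul_le_add_sq (a b : ℝ≥0∞) : 2 * a * b ≤ a ^ 2 + b ^ 2 := by
  induction a using ENNReal.recTopCoe with
  | top => simp [ENNReal.top_pow]
  | coe a =>
    induction b using ENNReal.recTopCoe with
    | top => simp [ENNReal.top_pow]
    | coe b => exact_mod_cast _root_.two_mul_le_add_sq a b

lemma lintegral_prod_fst_mul_comp_sub {c k : ℝ → ℝ≥0∞} (hc : AEMeasurable c)
    (hk : Measurable k) :
    ∫⁻ p : ℝ × ℝ, c p.1 * k (p.2 - p.1) = (∫⁻ u, k u) * ∫⁻ t, c t := by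
  have inner (t : ℝ) : ∫⁻ s, c t * k (s - t) = c t * ∫⁻ u, k u := by
    rw [lintegral_const_mul (f := fun s => k (s - t)) _ (by fun_prop),
      lintegral_sub_right_eq_self k]
  have hm : AEMeasurable (fun p : ℝ × ℝ => c p.1 * k (p.2 - p.1)) (volume.prod volume) :=
    hc.comp_fst.mul (hk.comp (measurable_snd.sub measurable_fst)).aemeasurable
  rw [Measure.volume_eq_prod, lintegral_prod _ hm, mul_comm]
  simp only [inner]
  exact lintegral_mul_const'' _ hc

lemma lintegral_prod_snd_mul_comp_sub {c k : ℝ → ℝ≥0∞} (hc : AEMeasurable c)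
    (hk : Measurable k) :
    ∫⁻ p : ℝ × ℝ, c p.2 * k (p.2 - p.1) = (∫⁻ u, k u) * ∫⁻ t, c t := by
  have inner (s : ℝ) : ∫⁻ t, c s * k (s - t) = c s * ∫⁻ u, k u := by
    rw [lintegral_const_mul (f := fun t => k (s - t)) _ (by fun_prop),
      lintegral_sub_left_eq_self k]
  have hm : AEMeasurable (fun p : ℝ × ℝ => c p.2 * k (p.2 - p.1)) (volume.prod volume) :=
    hc.comp_snd.mul (hk.comp (measurable_snd.sub measurable_fst)).aemeasurable
  rw [Measure.volume_eq_prod, lintegral_prod_symm _ hm, mul_comm]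
  simp only [inner]
  exact lintegral_mul_const'' _ hc

/-- The Schur test for a convolution kernel, via `2ab ≤ a² + b²`. -/
lemma lintegral_mul_mul_comp_sub_le {a k : ℝ → ℝ≥0∞} (ha : AEMeasurable a) (hk : Measurable k) :
    ∫⁻ p : ℝ × ℝ, a p.1 * a p.2 * k (p.2 - p.1) ≤ (∫⁻ u, k u) * ∫⁻ t, a t ^ 2 := by
  have ha₂ : AEMeasurable fun t => a t ^ 2 := ha.pow_const 2
  refine (ENNReal.mul_le_mul_iff_right two_ne_zero ofNat_ne_top).1 ?_
  calc 2 * ∫⁻ p : ℝ × ℝ, a p.1 * a p.2 * k (p.2 - p.1)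
      = ∫⁻ p : ℝ × ℝ, 2 * a p.1 * a p.2 * k (p.2 - p.1) := by
        rw [← lintegral_const_mul' _ _ ofNat_ne_top]
        simp only [mul_assoc]
    _ ≤ ∫⁻ p : ℝ × ℝ, a p.1 ^ 2 * k (p.2 - p.1) + a p.2 ^ 2 * k (p.2 - p.1) := by
        gcongr with p
        rw [← add_mul]
        gcongr
        exact ENNReal.two_mul_le_add_sq _ _
    _ = 2 * ((∫⁻ u, k u) * ∫⁻ t, a t ^ 2) := by
        have hm : AEMeasurable fun p : ℝ × ℝ => a p.1 ^ 2 * k (p.2 - p.1) :=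
          ha₂.comp_fst.mul (hk.comp (measurable_snd.sub measurable_fst)).aemeasurable
        rw [lintegral_add_left' hm,
          lintegral_prod_fst_mul_comp_sub ha₂ hk, lintegral_prod_snd_mul_comp_sub ha₂ hk, two_mul]

/-- `∫ e^{iux} e^{-bx²} dx`, the Fourier transform of a Gaussian. -/
noncomputable def gaussianKernel (b u : ℝ) : ℝ := √(π / b) * rexp (-u ^ 2 / (4 * b))

section gaussianKernel

variable {b : ℝ}

lemma gaussianKernel_nonneg (b u : ℝ) : 0 ≤ gaussianKernel b u := by
  unfold gaussianKernel; positivity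

lemma continuous_gaussianKernel (b : ℝ) : Continuous (gaussianKernel b) := by
  unfold gaussianKernel; fun_prop

lemma integral_cexp_mul_cexp_neg_mul_sq (hb : 0 < b) (u : ℝ) :
    ∫ x : ℝ, cexp (I * u * x) * cexp (-b * x ^ 2) = gaussianKernel b u := by
  rw [fourierIntegral_gaussian (by simpa using hb), gaussianKernel, Complex.ofReal_mul,
    Complex.ofReal_exp, Real.sqrt_eq_rpow, Complex.ofReal_cpow (by positivity)]
  push_cast
  ring_nf

lemma lintegral_gaussianKernel (hb : 0 < b) :
    ∫⁻ u, ENNReal.ofReal (gaussianKernel b u) = ENNReal.ofReal (2 * π) := by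
  have hform : gaussianKernel b = fun u => √(π / b) * rexp (-(4 * b)⁻¹ * u ^ 2) := by
    ext u; rw [gaussianKernel]; ring_nf
  have hint : ∫ u, gaussianKernel b u = 2 * π := by
    rw [hform, integral_const_mul, integral_gaussian, ← Real.sqrt_mul (by positivity),
      show π / b * (π / (4 * b)⁻¹) = (2 * π) ^ 2 by field_simp; ring]
    exact Real.sqrt_sq (by positivity)
  have hint' : Integrable (gaussianKernel b) := by
    rw [hform]
    exact (integrable_exp_neg_mul_sq (by positivity)).const_mul _
  rw [← hint, ofReal_integral_eq_lintegral_ofReal hint' (ae_of_all _ (gaussianKernel_nonneg b))]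

end gaussianKernel

section FT

variable {F : ℝ → ℂ}

lemma norm_FT_le (F : ℝ → ℂ) (x : ℝ) : ‖FT F x‖ ≤ (√(2 * π))⁻¹ * ∫ t, ‖F t‖ := by
  rw [FT, norm_mul, norm_inv, Complex.norm_real, Real.norm_of_nonneg (by positivity)]
  gcongr
  refine (norm_integral_le_integral_norm _).trans_eq ?_
  simp only [norm_mul, norm_cexp_neg_I_mul_mul, one_mul]

lemma continuous_FT (hF : Integrable F) : Continuous (FT F) := by
  refine continuous_const.mul (continuous_of_dominated (bound := fun t => ‖F t‖)
    (fun x => ?_) (fun x => ae_of_all _ fun t => ?_) hF.norm (ae_of_all _ fun t => ?_))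
  · exact (by fun_prop : Continuous fun t : ℝ => cexp (-(I * t * x))).aestronglyMeasurable.mul
      hF.1
  · rw [norm_mul, norm_cexp_neg_I_mul_mul, one_mul]
  · fun_prop

lemma FT_cexp_mul (F : ℝ → ℂ) (a x : ℝ) :
    FT (fun t => cexp (I * t * a) * F t) x = FT F (x - a) := by
  simp only [FT, ← mul_assoc, ← Complex.exp_add]
  congr 3 with t
  push_cast
  ring_nf

lemma FT_zero (F : ℝ → ℂ) : FT F 0 = (√(2 * π) : ℂ)⁻¹ * ∫ t, F t := by
  simp [FT]

lemma ofReal_norm_FT_sq (F : ℝ → ℂ) (x : ℝ) :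
    ((‖FT F x‖ ^ 2 : ℝ) : ℂ) =
      (2 * π : ℂ)⁻¹ * ∫ p : ℝ × ℝ, cexp (I * (p.2 - p.1) * x) * (F p.1 * conj (F p.2)) := by
  have hsqrt : ((√(2 * π) : ℂ)⁻¹) * (√(2 * π) : ℂ)⁻¹ = (2 * π : ℂ)⁻¹ := by
    rw [← mul_inv, ← Complex.ofReal_mul, Real.mul_self_sqrt (by positivity)]
    push_cast; rfl
  have hphase (t s : ℝ) : cexp (-(I * t * x)) * F t * conj (cexp (-(I * s * x)) * F s) =
      cexp (I * (s - t) * x) * (F t * conj (F s)) := by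
    rw [map_mul, ← Complex.exp_conj]
    simp only [map_neg, map_mul, conj_I, conj_ofReal]
    rw [show cexp (I * (s - t) * x) = cexp (-(I * t * x)) * cexp (-(-I * s * x)) by
      rw [← Complex.exp_add]; ring_nf]
    ring
  rw [← Complex.normSq_eq_norm_sq, ← Complex.mul_conj, FT, map_mul, ← integral_conj, map_inv₀,
    Complex.conj_ofReal, mul_mul_mul_comm, hsqrt, Measure.volume_eq_prod, ← integral_prod_mul]
  simp only [hphase]

lemma integral_gaussian_mul_norm_FT_sq (hF : Integrable F) {b : ℝ} (hb : 0 < b) :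
    ((∫ x, rexp (-b * x ^ 2) * ‖FT F x‖ ^ 2 : ℝ) : ℂ) =
      (2 * π : ℂ)⁻¹ *
        ∫ p : ℝ × ℝ, (gaussianKernel b (p.2 - p.1) : ℂ) * (F p.1 * conj (F p.2)) := by
  set Q : ℝ → ℝ × ℝ → ℂ := fun x p =>
    cexp (I * (p.2 - p.1) * x) * cexp (-b * x ^ 2) * (F p.1 * conj (F p.2)) with hQ_def
  have hQ : Integrable (Function.uncurry Q) (volume.prod volume) := by
    refine ((integrable_exp_neg_mul_sq hb).mul_prod (hF.norm.mul_prod hF.norm)).mono' ?_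
      (ae_of_all _ fun z => ?_)
    · have hF₁ : AEStronglyMeasurable (fun z : ℝ × ℝ × ℝ => F z.2.1)
          (volume.prod (volume.prod volume)) := hF.1.comp_fst.comp_snd
      have hF₂ : AEStronglyMeasurable (fun z : ℝ × ℝ × ℝ => conj (F z.2.2))
          (volume.prod (volume.prod volume)) := hF.1.comp_snd.comp_snd.star
      exact (by fun_prop : Continuous fun z : ℝ × ℝ × ℝ =>
        cexp (I * (z.2.2 - z.2.1) * z.1) * cexp (-b * z.1 ^ 2)).aestronglyMeasurable.mul
          (hF₁.mul hF₂)
    · simp only [Function.uncurry, hQ_def, norm_mul, Complex.norm_exp, RCLike.norm_conj]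
      simp [← Complex.ofReal_pow]
  have hinner (p : ℝ × ℝ) :
      ∫ x, Q x p = (gaussianKernel b (p.2 - p.1) : ℂ) * (F p.1 * conj (F p.2)) := by
    rw [integral_mul_const, ← Complex.ofReal_sub, integral_cexp_mul_cexp_neg_mul_sq hb]
  calc ((∫ x, rexp (-b * x ^ 2) * ‖FT F x‖ ^ 2 : ℝ) : ℂ)
      = ∫ x, (2 * π : ℂ)⁻¹ * ∫ p : ℝ × ℝ, Q x p := by
        rw [← integral_complex_ofReal]
        congr 1 with x
        rw [Complex.ofReal_mul, ofReal_norm_FT_sq, mul_left_comm, ← integral_const_mul]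
        congr 2 with p
        push_cast
        ring
    _ = _ := by
        rw [integral_const_mul, integral_integral_swap hQ]
        simp only [hinner]

lemma integrable_gaussian_mul_norm_FT_sq (hF : Integrable F) {b : ℝ} (hb : 0 < b) :
    Integrable fun x => rexp (-b * x ^ 2) * ‖FT F x‖ ^ 2 := by
  refine ((integrable_exp_neg_mul_sq hb).mul_const (((√(2 * π))⁻¹ * ∫ t, ‖F t‖) ^ 2)).mono'
    (by have := continuous_FT hF; fun_prop : Continuous fun x =>
      rexp (-b * x ^ 2) * ‖FT F x‖ ^ 2).aestronglyMeasurable (ae_of_all _ fun x => ?_)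
  rw [Real.norm_of_nonneg (by positivity)]
  gcongr
  exact norm_FT_le F x

lemma lintegral_gaussian_mul_enorm_FT_sq_le (hF : Integrable F) {b : ℝ} (hb : 0 < b) :
    ∫⁻ x, ENNReal.ofReal (rexp (-b * x ^ 2)) * ‖FT F x‖ₑ ^ 2 ≤ ∫⁻ t, ‖F t‖ₑ ^ 2 := by
  have hnonneg : ∀ x, 0 ≤ rexp (-b * x ^ 2) * ‖FT F x‖ ^ 2 := fun x => by positivity
  calc ∫⁻ x, ENNReal.ofReal (rexp (-b * x ^ 2)) * ‖FT F x‖ₑ ^ 2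
      = ‖((∫ x, rexp (-b * x ^ 2) * ‖FT F x‖ ^ 2 : ℝ) : ℂ)‖ₑ := by
        rw [Complex.enorm_ofReal_of_nonneg (integral_nonneg hnonneg),
          ofReal_integral_eq_lintegral_ofReal (integrable_gaussian_mul_norm_FT_sq hF hb)
            (ae_of_all _ hnonneg)]
        congr 1 with x
        rw [ENNReal.ofReal_mul (Real.exp_pos _).le, ENNReal.ofReal_pow (norm_nonneg _),
          ofReal_norm]
    _ = ENNReal.ofReal (2 * π)⁻¹ *
          ‖∫ p : ℝ × ℝ, (gaussianKernel b (p.2 - p.1) : ℂ) * (F p.1 * conj (F p.2))‖ₑ := by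
        rw [integral_gaussian_mul_norm_FT_sq hF hb, enorm_mul, ← Complex.ofReal_ofNat,
          ← Complex.ofReal_mul, ← Complex.ofReal_inv,
          Complex.enorm_ofReal_of_nonneg (by positivity)]
    _ ≤ ENNReal.ofReal (2 * π)⁻¹ *
          ∫⁻ p : ℝ × ℝ, ‖F p.1‖ₑ * ‖F p.2‖ₑ * ENNReal.ofReal (gaussianKernel b (p.2 - p.1)) := by
        gcongr
        refine (enorm_integral_le_lintegral_enorm _).trans_eq (lintegral_congr fun p => ?_)
        rw [enorm_mul, enorm_mul, RCLike.enorm_conj,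
          Complex.enorm_ofReal_of_nonneg (gaussianKernel_nonneg _ _), mul_comm]
    _ ≤ ENNReal.ofReal (2 * π)⁻¹ * (ENNReal.ofReal (2 * π) * ∫⁻ t, ‖F t‖ₑ ^ 2) := by
        gcongr
        rw [← lintegral_gaussianKernel hb]
        exact lintegral_mul_mul_comp_sub_le hF.1.enorm
          (continuous_gaussianKernel b).measurable.ennreal_ofReal
    _ = ∫⁻ t, ‖F t‖ₑ ^ 2 := by
        rw [← mul_assoc, ← ENNReal.ofReal_mul (by positivity),
          inv_mul_cancel₀ (by positivity), ENNReal.ofReal_one, one_mul]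

open Topology in
lemma lintegral_enorm_FT_sq_le (hF : Integrable F) :
    ∫⁻ x, ‖FT F x‖ₑ ^ 2 ≤ ∫⁻ t, ‖F t‖ₑ ^ 2 := by
  have hlim (x : ℝ) : Tendsto (fun b => ENNReal.ofReal (rexp (-b * x ^ 2)) * ‖FT F x‖ₑ ^ 2)
      (𝓝[>] 0) (𝓝 (‖FT F x‖ₑ ^ 2)) := by
    have h : Tendsto (fun b : ℝ => ENNReal.ofReal (rexp (-b * x ^ 2))) (𝓝[>] 0) (𝓝 1) := by
      refine tendsto_nhdsWithin_of_tendsto_nhds ?_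
      simpa using ENNReal.tendsto_ofReal
        ((by fun_prop : Continuous fun b : ℝ => rexp (-b * x ^ 2)).tendsto 0)
    simpa using ENNReal.Tendsto.mul_const h (Or.inr (by simp))
  calc ∫⁻ x, ‖FT F x‖ₑ ^ 2
      = ∫⁻ x, liminf (fun b => ENNReal.ofReal (rexp (-b * x ^ 2)) * ‖FT F x‖ₑ ^ 2) (𝓝[>] 0) :=
        lintegral_congr fun x => (hlim x).liminf_eq.symm
    _ ≤ liminf (fun b => ∫⁻ x, ENNReal.ofReal (rexp (-b * x ^ 2)) * ‖FT F x‖ₑ ^ 2) (𝓝[>] 0) :=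
        lintegral_liminf_le fun b => by have := continuous_FT hF; fun_prop
    _ ≤ ∫⁻ t, ‖F t‖ₑ ^ 2 := liminf_le_of_frequently_le'
        ((eventually_mem_nhdsWithin (a := (0 : ℝ)) (s := Set.Ioi 0)).mono fun b hb =>
          lintegral_gaussian_mul_enorm_FT_sq_le hF hb).frequently

lemma integral_norm_FT_sq_le (hF : Integrable F) (hF₂ : MemLp F 2) :
    ∫ x, ‖FT F x‖ ^ 2 ≤ ∫ t, ‖F t‖ ^ 2 := by
  have hlin (G : ℝ → ℂ) (hG : AEStronglyMeasurable G) :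
      ∫ x, ‖G x‖ ^ 2 = (∫⁻ x, ‖G x‖ₑ ^ 2).toReal := by
    rw [integral_eq_lintegral_of_nonneg_ae (f := fun x => ‖G x‖ ^ 2)
      (ae_of_all _ fun x => sq_nonneg ‖G x‖) (hG.norm.pow 2)]
    simp only [ENNReal.ofReal_pow (norm_nonneg _), ofReal_norm]
  rw [hlin _ (continuous_FT hF).aestronglyMeasurable, hlin _ hF.1]
  refine ENNReal.toReal_mono (ne_of_lt ?_) (lintegral_enorm_FT_sq_le hF)
  simpa using lintegral_rpow_enorm_lt_top_of_eLpNorm_lt_top two_ne_zero ofNat_ne_top hF₂.2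

end FT

lemma encard_inter_le_of_tsum_le {α : Type*} {s t : Set α} {f : α → ℝ≥0∞} {m B : ℝ}
    (hm : 0 < m) (ht : ∀ x ∈ t, ENNReal.ofReal m ≤ f x) (hB : ∑' x : s, f x ≤ ENNReal.ofReal B) :
    ((s ∩ t).encard : ℝ≥0∞) ≤ ENNReal.ofReal (B / m) := by
  rw [ENNReal.ofReal_div_of_pos hm, ENNReal.le_div_iff_mul_le (.inl (by simpa using hm))
    (.inl ofReal_ne_top)]
  calc ((s ∩ t).encard : ℝ≥0∞) * ENNReal.ofReal m = ∑' _ : ↥(s ∩ t), ENNReal.ofReal m :=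
        (ENNReal.tsum_const _).symm
    _ ≤ ∑' x : ↥(s ∩ t), f x := ENNReal.tsum_le_tsum fun x => ht x x.2.2
    _ ≤ ∑' x : s, f x := ENNReal.tsum_mono_subtype f Set.inter_subset_left
    _ ≤ ENNReal.ofReal B := hB

section indicator

variable {Ω : Set ℝ}

lemma norm_cexp_mul_indicator_sq (Ω : Set ℝ) (a t : ℝ) :
    ‖cexp (I * t * a) * Ω.indicator 1 t‖ ^ 2 = Ω.indicator (1 : ℝ → ℝ) t := by
  by_cases ht : t ∈ Ω <;> simp [ht, norm_cexp_I_mul_mul]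

lemma memLp_cexp_mul_indicator (hmeas : MeasurableSet Ω) (hfin : volume Ω < ⊤) (p : ℝ≥0∞)
    (a : ℝ) : MemLp (fun t : ℝ => cexp (I * t * a) * Ω.indicator 1 t) p := by
  refine (memLp_indicator_const p hmeas (1 : ℂ) (.inr hfin.ne)).of_le
    ((by fun_prop : Continuous fun t : ℝ => cexp (I * t * a)).aestronglyMeasurable.mul
      (aestronglyMeasurable_one.indicator hmeas)) (ae_of_all _ fun t => ?_)
  rw [norm_mul, norm_cexp_I_mul_mul, one_mul]
  rfl

lemma integral_norm_cexp_mul_indicator_sq (hmeas : MeasurableSet Ω) (a : ℝ) :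
    ∫ t : ℝ, ‖cexp (I * t * a) * Ω.indicator 1 t‖ ^ 2 = (volume Ω).toReal := by
  simp only [norm_cexp_mul_indicator_sq, integral_indicator_one hmeas, Measure.real]

lemma exists_lt_norm_FT_indicator (hmeas : MeasurableSet Ω) (hfin : volume Ω < ⊤)
    (hpos : 0 < volume Ω) :
    ∃ ε > 0, ∀ y, |y| < ε → (volume Ω).toReal / 3 < ‖FT (Ω.indicator 1) y‖ := by
  have hV : 0 < (volume Ω).toReal := ENNReal.toReal_pos hpos.ne' hfin.ne
  have hzero : (volume Ω).toReal / 3 < ‖FT (Ω.indicator 1) 0‖ := by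
    rw [FT_zero, Pi.one_def, integral_indicator_const (1 : ℂ) hmeas, norm_mul, norm_inv,
      Complex.norm_real, Real.norm_of_nonneg (by positivity), norm_smul, norm_one, mul_one,
      Real.norm_of_nonneg measureReal_nonneg, inv_mul_eq_div, Measure.real]
    refine div_lt_div_of_pos_left hV (by positivity) ?_
    rw [Real.sqrt_lt' (by norm_num)]
    linarith [Real.pi_le_four]
  have hcont : Continuous fun y => ‖FT (Ω.indicator 1) y‖ :=
    (continuous_FT ((memLp_one_iff_integrable).1
      (memLp_indicator_const 1 hmeas (1 : ℂ) (.inr hfin.ne)))).norm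
  simpa [Real.dist_eq] using Metric.eventually_nhds_iff.1
    (hcont.continuousAt.eventually (lt_mem_nhds hzero))

end indicator

/-- Lemma 6 (i): if the sampling upper bound
`∑_{λ ∈ Λ} |f λ|² ≤ C |Ω| ‖f‖²` holds on `PW_Ω`, then there is `η > 0`,
depending only on `Ω`, with `#(Λ ∩ I) ≤ 9C` for every interval `I` of length `η`. -/
theorem stmt12 (Ω : Set ℝ) (hmeas : MeasurableSet Ω) (hpos : 0 < volume Ω)
    (hfin : volume Ω < ⊤) (C : ℝ) (hC : 0 < C) (Λ : Set ℝ)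
    (hyp : ∀ f : ℝ → ℂ, IsPW Ω f →
      ∑' l : ↥Λ, (‖f (l : ℝ)‖₊ ^ 2 : ℝ≥0∞) ≤
        ENNReal.ofReal (C * (volume Ω).toReal * ∫ x : ℝ, ‖f x‖ ^ 2)) :
    ∃ η : ℝ, 0 < η ∧ ∀ a : ℝ,
      (Λ ∩ Set.Icc a (a + η)).encard ≤ ENNReal.ofReal (9 * C) := by
  set V := (volume Ω).toReal
  have hV : 0 < V := ENNReal.toReal_pos hpos.ne' hfin.ne
  obtain ⟨ε, hε, hnear⟩ := exists_lt_norm_FT_indicator hmeas hfin hpos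
  refine ⟨ε / 2, by positivity, fun a => ?_⟩
  set F : ℝ → ℂ := fun t => cexp (I * t * a) * Ω.indicator 1 t
  have hF₂ : MemLp F 2 := memLp_cexp_mul_indicator hmeas hfin 2 a
  have hF₁ : Integrable F := memLp_one_iff_integrable.1 (memLp_cexp_mul_indicator hmeas hfin 1 a)
  have hPW : IsPW Ω (FT F) :=
    ⟨F, hF₂, fun t ht => by simp [F, Set.indicator_of_notMem ht], hF₁, fun _ => rfl⟩
  have hnorm : ∫ x, ‖FT F x‖ ^ 2 ≤ V :=
    (integral_norm_FT_sq_le hF₁ hF₂).trans_eq (integral_norm_cexp_mul_indicator_sq hmeas a)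
  have hlow (x : ℝ) (hx : x ∈ Set.Icc a (a + ε / 2)) :
      ENNReal.ofReal ((V / 3) ^ 2) ≤ (‖FT F x‖₊ ^ 2 : ℝ≥0∞) := by
    rw [FT_cexp_mul, ← enorm_eq_nnnorm, ← ofReal_norm, ← ENNReal.ofReal_pow (norm_nonneg _)]
    refine ENNReal.ofReal_le_ofReal (pow_le_pow_left₀ (by positivity) (hnear _ ?_).le 2)
    rw [abs_of_nonneg (by linarith [hx.1])]
    linarith [hx.2]
  calc ((Λ ∩ Set.Icc a (a + ε / 2)).encard : ℝ≥0∞)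
      ≤ ENNReal.ofReal (C * V * V / (V / 3) ^ 2) :=
        encard_inter_le_of_tsum_le (by positivity) hlow
          ((hyp _ hPW).trans (ENNReal.ofReal_le_ofReal (by gcongr)))
    _ = ENNReal.ofReal (9 * C) := by
        congr 1
        field_simp
        ring
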